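/- arXiv:2412.14364 — 6 statements merged into one kernel-verified Lean document; each statement's English description precedes it below -/
import Mathlib

section
/- The pseudoachromatic number of the complete bipartite graph $K_{d,n}$ with $n \ge d \ge 1$ is exactly $d+1$. -/
/-- A pseudocomplete colouring with colour set `Fin k`: every two distinct colours
appear together on at least one edge. -/
def IsPseudocomplete {V : Type*} (G : SimpleGraph V) {k : ℕ} (c : V → Fin k) : Prop :=
  ∀ i j : Fin k, i ≠ j → ∃ u v : V, G.Adj u v ∧ c u = i ∧ c v = j

/-- The pseudoachromatic number of the complete bipartite graph
`K_{d,n}` with `n ≥ d ≥ 1` is exactly `d+1`: it admits a pseudocomplete colouring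
with `d+1` colours, and no pseudocomplete colouring uses more than `d+1` colours. -/
theorem stmt_2 (d n : ℕ) (hd : 1 ≤ d) (hn : d ≤ n) :
    (∃ c : (Fin d ⊕ Fin n) → Fin (d + 1),
      IsPseudocomplete (completeBipartiteGraph (Fin d) (Fin n)) c) ∧
    (∀ (k : ℕ) (c : (Fin d ⊕ Fin n) → Fin k),
      IsPseudocomplete (completeBipartiteGraph (Fin d) (Fin n)) c → k ≤ d + 1) := by
  constructor
  · refine ⟨Sum.elim (fun i => i.castSucc)
      (fun j => if h : j.val + 1 < d then ⟨j.val, by omega⟩ else ⟨d, by omega⟩), ?_⟩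
    intro i j hij
    have hvne : i.val ≠ j.val := fun h => hij (Fin.ext h)
    have hi' : i.val < d + 1 := i.isLt
    have hj' : j.val < d + 1 := j.isLt
    by_cases hi : i.val = d
    · refine ⟨Sum.inr ⟨d - 1, by omega⟩, Sum.inl ⟨j.val, by omega⟩, by simp, ?_, ?_⟩
      · simp only [Sum.elim_inr]
        rw [dif_neg (by omega)]
        exact Fin.ext (by simpa using hi.symm)
      · exact Fin.ext (by simp)
    · by_cases hj : j.val = d
      · refine ⟨Sum.inl ⟨i.val, by omega⟩, Sum.inr ⟨d - 1, by omega⟩, by simp, ?_, ?_⟩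
        · exact Fin.ext (by simp)
        · simp only [Sum.elim_inr]
          rw [dif_neg (by omega)]
          exact Fin.ext (by simpa using hj.symm)
      · by_cases hjd : j.val + 1 < d
        · refine ⟨Sum.inl ⟨i.val, by omega⟩, Sum.inr ⟨j.val, by omega⟩, by simp, ?_, ?_⟩
          · exact Fin.ext (by simp)
          · simp only [Sum.elim_inr]
            rw [dif_pos (by omega)]
        · -- j.val = d - 1, so i.val + 1 < d
          refine ⟨Sum.inr ⟨i.val, by omega⟩, Sum.inl ⟨j.val, by omega⟩, by simp, ?_, ?_⟩
          · simp only [Sum.elim_inr]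
            rw [dif_pos (by omega)]
          · exact Fin.ext (by simp)
  · intro k c hc
    classical
    set S : Finset (Fin k) := Finset.univ.image (fun i : Fin d => c (Sum.inl i)) with hS
    have h1 : S.card ≤ d := le_trans Finset.card_image_le (by simp)
    have h2 : Sᶜ.card ≤ 1 := by
      rw [Finset.card_le_one]
      intro a ha b hb
      by_contra hab
      obtain ⟨u, v, huv, hu, hv⟩ := hc a b hab
      simp only [hS, Finset.mem_compl, Finset.mem_image, Finset.mem_univ, true_and,
        not_exists] at ha hb
      cases u with
      | inl x => exact ha x hu
      | inr x =>
        cases v with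
        | inl y => exact hb y hv
        | inr y => simp at huv
    have hk : S.card + Sᶜ.card = k := (Finset.card_add_card_compl S).trans (by simp)
    omega
end

section
/- Let $0 \le 2d \le n$ and let $G$ be an $n$-vertex graph with $\delta(G) \ge (n+2d)/2 - 1$. If $A$ is a vertex subset with $2d \le |A| = a < n/2$, then the number of edges between $A$ and $V \setminus A$ is at least $d(n-a)$. -/
/-- Let `0 ≤ 2d ≤ n` and let `G` be an `n`-vertex graph with
minimum degree at least `(n+2d)/2 - 1`. If `A` is a vertex subset with
`2d ≤ |A| = a < n/2`, then the number of edges between `A` and its complement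
(counted as `∑_{x ∉ A} deg(x, A)`) is at least `d(n-a)`. -/
theorem stmt_3 {V : Type*} [Fintype V] [DecidableEq V] (G : SimpleGraph V)
    [DecidableRel G.Adj] (n d : ℕ) (hn : Fintype.card V = n) (hd : 2 * d ≤ n)
    (hδ : ∀ v : V, ((n : ℝ) + 2 * d) / 2 - 1 ≤ (G.degree v : ℝ))
    (A : Finset V) (hA1 : 2 * d ≤ A.card) (hA2 : (A.card : ℝ) < n / 2) :
    (d : ℝ) * ((n : ℝ) - A.card) ≤
      ∑ x ∈ Aᶜ, ((A.filter fun a => G.Adj x a).card : ℝ) := by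
  -- double counting: swap to sum over A
  have hswap : ∑ x ∈ Aᶜ, ((A.filter fun a => G.Adj x a).card : ℝ)
      = ∑ y ∈ A, ((Aᶜ.filter fun x => G.Adj y x).card : ℝ) := by
    simp only [Finset.card_filter]
    push_cast
    rw [Finset.sum_comm]
    apply Finset.sum_congr rfl
    intro y _
    apply Finset.sum_congr rfl
    intro x _
    simp [G.adj_comm]
  rw [hswap]
  -- lower bound each term
  have key : ∀ y ∈ A, ((n:ℝ) + 2*d)/2 - A.card ≤ ((Aᶜ.filter fun x => G.Adj y x).card : ℝ) := by
    intro y hy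
    have hsplit : (A.filter fun x => G.Adj y x).card + (Aᶜ.filter fun x => G.Adj y x).card
        = G.degree y := by
      rw [← Finset.card_union_of_disjoint]
      · rw [← Finset.filter_union, Finset.union_compl]
        simp [SimpleGraph.degree, SimpleGraph.neighborFinset_eq_filter]
      · exact Finset.disjoint_filter_filter disjoint_compl_right
    have hsub : (A.filter fun x => G.Adj y x) ⊆ A.erase y := by
      intro z hz
      simp only [Finset.mem_filter] at hz
      refine Finset.mem_erase.2 ⟨?_, hz.1⟩
      rintro rfl; exact G.irrefl hz.2
    have hcard : ((A.filter fun x => G.Adj y x).card : ℝ) ≤ (A.card : ℝ) - 1 := by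
      have := Finset.card_le_card hsub
      have h1 : 1 ≤ A.card := Finset.card_pos.2 ⟨y, hy⟩
      have := Finset.card_erase_of_mem hy ▸ this
      have : (A.filter fun x => G.Adj y x).card ≤ A.card - 1 := this
      calc ((A.filter fun x => G.Adj y x).card : ℝ) ≤ ((A.card - 1 : ℕ) : ℝ) := by
            exact_mod_cast this
        _ = (A.card : ℝ) - 1 := by
            rw [Nat.cast_sub h1]; norm_num
    have hdeg := hδ y
    have : ((n:ℝ) + 2*d)/2 - 1 ≤ ((A.filter fun x => G.Adj y x).card : ℝ)
        + ((Aᶜ.filter fun x => G.Adj y x).card : ℝ) := by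
      rw [← Nat.cast_add, hsplit]; exact hdeg
    linarith
  have hsum : (A.card : ℝ) * (((n:ℝ) + 2*d)/2 - A.card)
      ≤ ∑ y ∈ A, ((Aᶜ.filter fun x => G.Adj y x).card : ℝ) := by
    calc (A.card : ℝ) * (((n:ℝ) + 2*d)/2 - A.card)
        = ∑ _y ∈ A, (((n:ℝ) + 2*d)/2 - A.card) := by
          rw [Finset.sum_const, nsmul_eq_mul]
      _ ≤ _ := Finset.sum_le_sum key
  have ha : (2*d : ℝ) ≤ (A.card : ℝ) := by exact_mod_cast hA1
  nlinarith [hsum, hA2, ha]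
end

section
/- Let $0 < \varepsilon < 1/4$ and $\delta > 4\varepsilon$. Let $A_1, A_2, A_3$ be pairwise disjoint vertex sets of equal size $M$ in a graph $G$ such that each pair $(A_i, A_j)$, $1 \le i < j \le 3$, is $(\varepsilon,\delta)$-regular. Then there exist $M' \ge (1-2\varepsilon)M$ and subsets $A_i' \subseteq A_i$ with $|A_i'| = M'$ for each $i$, such that each pair $(A_i', A_j')$ is $(2\varepsilon, \delta - 4\varepsilon)$-super-regular. -/
/-- The density `d(X,Y) = e(X,Y)/(|X||Y|)` of a pair of (disjoint) vertex sets,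
where `e(X,Y) = ∑_{x ∈ X} deg(x, Y)`. -/
noncomputable def dens {V : Type*} [DecidableEq V] (G : SimpleGraph V)
    [DecidableRel G.Adj] (X Y : Finset V) : ℝ :=
  (∑ x ∈ X, ((Y.filter fun y => G.Adj x y).card : ℝ)) / ((X.card : ℝ) * (Y.card : ℝ))

/-- A pair `(A,B)` is `ε`-regular if all large sub-pairs have density within `ε` of
the density of `(A,B)`. -/
def IsRegularPair {V : Type*} [DecidableEq V] (G : SimpleGraph V) [DecidableRel G.Adj]
    (ε : ℝ) (A B : Finset V) : Prop :=
  ∀ X ⊆ A, ∀ Y ⊆ B, ε * A.card ≤ X.card → ε * B.card ≤ Y.card →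
    |dens G X Y - dens G A B| ≤ ε

/-- A pair `(A,B)` is `(ε,δ)`-super-regular if it is `ε`-regular and every vertex of
`A` has at least `δ|B|` neighbours in `B` and vice versa. -/
def IsSuperRegularPair {V : Type*} [DecidableEq V] (G : SimpleGraph V)
    [DecidableRel G.Adj] (ε δ : ℝ) (A B : Finset V) : Prop :=
  IsRegularPair G ε A B ∧
    (∀ x ∈ A, δ * B.card ≤ ((B.filter fun y => G.Adj x y).card : ℝ)) ∧
    (∀ y ∈ B, δ * A.card ≤ ((A.filter fun x => G.Adj y x).card : ℝ))

lemma dens_comm {V : Type*} [DecidableEq V] (G : SimpleGraph V) [DecidableRel G.Adj]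
    (X Y : Finset V) : dens G X Y = dens G Y X := by
  unfold dens
  rw [mul_comm]
  congr 1
  have h : ∀ (S T : Finset V), ∑ x ∈ S, ((T.filter fun y => G.Adj x y).card : ℝ)
      = ∑ x ∈ S, ∑ y ∈ T, (if G.Adj x y then (1:ℝ) else 0) := by
    intro S T
    refine Finset.sum_congr rfl fun x _ => ?_
    simp [Finset.sum_boole]
  rw [h, h, Finset.sum_comm]
  refine Finset.sum_congr rfl fun y _ => Finset.sum_congr rfl fun x _ => ?_
  simp [G.adj_comm]

lemma regular_comm {V : Type*} [DecidableEq V] (G : SimpleGraph V) [DecidableRel G.Adj]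
    {ε : ℝ} {A B : Finset V} (h : IsRegularPair G ε A B) : IsRegularPair G ε B A := by
  intro X hX Y hY hXc hYc
  rw [dens_comm G X Y, dens_comm G B A]
  exact h Y hY X hX hYc hXc

/-- The set of vertices of `A` with few neighbours in `B` is small. -/
lemma badset_small {V : Type*} [DecidableEq V] (G : SimpleGraph V) [DecidableRel G.Adj]
    {ε δ : ℝ} (hε0 : 0 < ε) (hε1 : ε ≤ 1) (hδ0 : 0 < δ) {A B X : Finset V}
    (hreg : IsRegularPair G ε A B) (hd : δ ≤ dens G A B) (hXA : X ⊆ A)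
    (hdeg : ∀ x ∈ X, ((B.filter fun y => G.Adj x y).card : ℝ) < (δ - ε) * B.card) :
    (X.card : ℝ) ≤ ε * A.card := by
  by_contra h
  push_neg at h
  have hX0 : 0 < (X.card : ℝ) := lt_of_le_of_lt (by positivity) h
  have hXne : X.Nonempty := by
    rw [← Finset.card_pos]; exact_mod_cast hX0
  have hBne : 0 < (B.card : ℝ) := by
    rcases B.eq_empty_or_nonempty with hB | hB
    · exfalso; rw [hB] at hd; simp [dens] at hd; linarith
    · exact_mod_cast Finset.card_pos.mpr hB
  have h1 := hreg X hXA B le_rfl h.le (by nlinarith)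
  have h2 : dens G X B < δ - ε := by
    have hsum : ∑ x ∈ X, ((B.filter fun y => G.Adj x y).card : ℝ)
        < ∑ _x ∈ X, (δ - ε) * B.card :=
      Finset.sum_lt_sum_of_nonempty hXne hdeg
    rw [Finset.sum_const, nsmul_eq_mul] at hsum
    rw [dens, div_lt_iff₀ (by positivity)]
    nlinarith
  have h3 := abs_le.mp h1
  linarith [h3.1]

/-- Slicing: large subsets of a regular pair form a `2ε`-regular pair. -/
lemma subpair_regular {V : Type*} [DecidableEq V] (G : SimpleGraph V) [DecidableRel G.Adj]
    {ε : ℝ} (hε0 : 0 < ε) (hε : ε < 1 / 4) {A B A' B' : Finset V}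
    (hA : A' ⊆ A) (hB : B' ⊆ B)
    (hA' : (1 - 2 * ε) * A.card ≤ A'.card) (hB' : (1 - 2 * ε) * B.card ≤ B'.card)
    (hreg : IsRegularPair G ε A B) : IsRegularPair G (2 * ε) A' B' := by
  have key : ∀ X ⊆ A', ∀ Y ⊆ B', 2 * ε * A'.card ≤ X.card → 2 * ε * B'.card ≤ Y.card →
      |dens G X Y - dens G A B| ≤ ε := by
    intro X hX Y hY hXc hYc
    refine hreg X (hX.trans hA) Y (hY.trans hB) ?_ ?_
    · nlinarith [(Nat.cast_nonneg A.card : (0:ℝ) ≤ A.card)]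
    · nlinarith [(Nat.cast_nonneg B.card : (0:ℝ) ≤ B.card)]
  intro X hX Y hY hXc hYc
  have h1 := key X hX Y hY hXc hYc
  have hca : (0:ℝ) ≤ A'.card := Nat.cast_nonneg _
  have hcb : (0:ℝ) ≤ B'.card := Nat.cast_nonneg _
  have h2 := key A' le_rfl B' le_rfl
    (by nlinarith [mul_nonneg hca (by linarith : (0:ℝ) ≤ 1 - 2 * ε)])
    (by nlinarith [mul_nonneg hcb (by linarith : (0:ℝ) ≤ 1 - 2 * ε)])
  calc |dens G X Y - dens G A' B'|
      ≤ |dens G X Y - dens G A B| + |dens G A B - dens G A' B'| := abs_sub_le _ _ _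
    _ = |dens G X Y - dens G A B| + |dens G A' B' - dens G A B| := by
        rw [abs_sub_comm (dens G A B)]
    _ ≤ 2 * ε := by linarith

lemma deg_transfer {V : Type*} [DecidableEq V] {B' B : Finset V} (hB : B' ⊆ B)
    (p : V → Prop) [DecidablePred p] :
    ((B.filter p).card : ℝ) - ((B.card : ℝ) - (B'.card : ℝ)) ≤ ((B'.filter p).card : ℝ) := by
  have h1 : B.filter p ⊆ (B'.filter p) ∪ (B \ B') := by
    intro y hy
    rw [Finset.mem_filter] at hy
    by_cases hyB : y ∈ B'
    · exact Finset.mem_union_left _ (Finset.mem_filter.mpr ⟨hyB, hy.2⟩)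
    · exact Finset.mem_union_right _ (Finset.mem_sdiff.mpr ⟨hy.1, hyB⟩)
  have h2 := (Finset.card_le_card h1).trans (Finset.card_union_le _ _)
  have h3 : (B \ B').card = B.card - B'.card := Finset.card_sdiff_of_subset hB
  have h4 : B'.card ≤ B.card := Finset.card_le_card hB
  rw [h3] at h2
  have h5 := (Nat.cast_le (α := ℝ)).mpr h2
  rw [Nat.cast_add, Nat.cast_sub h4] at h5
  linarith

/-- The numeric inequality for the degree condition. -/
lemma deg_numeric {ε δ b b' f f' : ℝ} (hε0 : 0 < ε) (hδ : 4 * ε < δ)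
    (hb0 : 0 ≤ b') (hbb : b' ≤ b) (hbc : (1 - 2 * ε) * b ≤ b')
    (hf : (δ - ε) * b ≤ f) (hf' : f - (b - b') ≤ f') :
    (δ - 4 * ε) * b' ≤ f' := by
  rcases le_or_gt δ (1 + 4 * ε) with hc | hc
  · nlinarith [mul_nonneg (by linarith : (0:ℝ) ≤ 1 - δ + 4 * ε)
      (by linarith : (0:ℝ) ≤ b' - (1 - 2 * ε) * b),
      mul_nonneg (mul_nonneg hε0.le (by linarith : (0:ℝ) ≤ 1 + 2 * δ - 8 * ε))
        (by linarith : (0:ℝ) ≤ b)]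
  · nlinarith [mul_nonneg (by linarith : (0:ℝ) ≤ δ - 1 - ε) (by linarith : (0:ℝ) ≤ b - b'),
      mul_nonneg hε0.le hb0]

lemma pair_superreg {V : Type*} [DecidableEq V] (G : SimpleGraph V) [DecidableRel G.Adj]
    {ε δ : ℝ} (hε0 : 0 < ε) (hε : ε < 1 / 4) (hδ : 4 * ε < δ)
    {A B A' B' : Finset V} (hA : A' ⊆ A) (hB : B' ⊆ B)
    (hAc : (1 - 2 * ε) * A.card ≤ A'.card) (hBc : (1 - 2 * ε) * B.card ≤ B'.card)
    (hreg : IsRegularPair G ε A B)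
    (hdegA : ∀ x ∈ A', (δ - ε) * B.card ≤ ((B.filter fun y => G.Adj x y).card : ℝ))
    (hdegB : ∀ y ∈ B', (δ - ε) * A.card ≤ ((A.filter fun x => G.Adj y x).card : ℝ)) :
    IsSuperRegularPair G (2 * ε) (δ - 4 * ε) A' B' := by
  refine ⟨subpair_regular G hε0 hε hA hB hAc hBc hreg, ?_, ?_⟩
  · intro x hx
    exact deg_numeric hε0 hδ (Nat.cast_nonneg _)
      (by exact_mod_cast Finset.card_le_card hB) hBc (hdegA x hx)
      (deg_transfer hB _)
  · intro y hy
    exact deg_numeric hε0 hδ (Nat.cast_nonneg _)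
      (by exact_mod_cast Finset.card_le_card hA) hAc (hdegB y hy)
      (deg_transfer hA _)

/-- Lemma 4.2: every regular triple contains an almost-spanning
super-regular sub-triple. -/
theorem stmt_7 {V : Type*} [DecidableEq V] (G : SimpleGraph V) [DecidableRel G.Adj]
    (ε δ : ℝ) (hε0 : 0 < ε) (hε : ε < 1 / 4) (hδ : 4 * ε < δ)
    (M : ℕ) (A1 A2 A3 : Finset V)
    (h12 : Disjoint A1 A2) (h13 : Disjoint A1 A3) (h23 : Disjoint A2 A3)
    (hc1 : A1.card = M) (hc2 : A2.card = M) (hc3 : A3.card = M)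
    (hr12 : IsRegularPair G ε A1 A2 ∧ δ ≤ dens G A1 A2)
    (hr13 : IsRegularPair G ε A1 A3 ∧ δ ≤ dens G A1 A3)
    (hr23 : IsRegularPair G ε A2 A3 ∧ δ ≤ dens G A2 A3) :
    ∃ (M' : ℕ) (A1' A2' A3' : Finset V),
      (1 - 2 * ε) * M ≤ (M' : ℝ) ∧
      A1' ⊆ A1 ∧ A2' ⊆ A2 ∧ A3' ⊆ A3 ∧
      A1'.card = M' ∧ A2'.card = M' ∧ A3'.card = M' ∧
      IsSuperRegularPair G (2 * ε) (δ - 4 * ε) A1' A2' ∧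
      IsSuperRegularPair G (2 * ε) (δ - 4 * ε) A1' A3' ∧
      IsSuperRegularPair G (2 * ε) (δ - 4 * ε) A2' A3' := by
  classical
  obtain ⟨hreg12, hd12⟩ := hr12
  obtain ⟨hreg13, hd13⟩ := hr13
  obtain ⟨hreg23, hd23⟩ := hr23
  have hδ0 : 0 < δ := by linarith
  have hε1 : ε ≤ 1 := by linarith
  have hreg21 := regular_comm G hreg12
  have hd21 : δ ≤ dens G A2 A1 := by rw [← dens_comm]; exact hd12
  have hreg31 := regular_comm G hreg13
  have hd31 : δ ≤ dens G A3 A1 := by rw [← dens_comm]; exact hd13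
  have hreg32 := regular_comm G hreg23
  have hd32 : δ ≤ dens G A3 A2 := by rw [← dens_comm]; exact hd23
  -- bad sets
  set B12 := A1.filter (fun x => ((A2.filter fun y => G.Adj x y).card : ℝ) < (δ - ε) * A2.card) with hB12def
  set B13 := A1.filter (fun x => ((A3.filter fun y => G.Adj x y).card : ℝ) < (δ - ε) * A3.card) with hB13def
  set B21 := A2.filter (fun x => ((A1.filter fun y => G.Adj x y).card : ℝ) < (δ - ε) * A1.card) with hB21def
  set B23 := A2.filter (fun x => ((A3.filter fun y => G.Adj x y).card : ℝ) < (δ - ε) * A3.card) with hB23def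
  set B31 := A3.filter (fun x => ((A1.filter fun y => G.Adj x y).card : ℝ) < (δ - ε) * A1.card) with hB31def
  set B32 := A3.filter (fun x => ((A2.filter fun y => G.Adj x y).card : ℝ) < (δ - ε) * A2.card) with hB32def
  have hb12 : (B12.card : ℝ) ≤ ε * A1.card := badset_small G hε0 hε1 hδ0 hreg12 hd12
    (Finset.filter_subset _ _) (fun x hx => (Finset.mem_filter.mp hx).2)
  have hb13 : (B13.card : ℝ) ≤ ε * A1.card := badset_small G hε0 hε1 hδ0 hreg13 hd13
    (Finset.filter_subset _ _) (fun x hx => (Finset.mem_filter.mp hx).2)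
  have hb21 : (B21.card : ℝ) ≤ ε * A2.card := badset_small G hε0 hε1 hδ0 hreg21 hd21
    (Finset.filter_subset _ _) (fun x hx => (Finset.mem_filter.mp hx).2)
  have hb23 : (B23.card : ℝ) ≤ ε * A2.card := badset_small G hε0 hε1 hδ0 hreg23 hd23
    (Finset.filter_subset _ _) (fun x hx => (Finset.mem_filter.mp hx).2)
  have hb31 : (B31.card : ℝ) ≤ ε * A3.card := badset_small G hε0 hε1 hδ0 hreg31 hd31
    (Finset.filter_subset _ _) (fun x hx => (Finset.mem_filter.mp hx).2)
  have hb32 : (B32.card : ℝ) ≤ ε * A3.card := badset_small G hε0 hε1 hδ0 hreg32 hd32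
    (Finset.filter_subset _ _) (fun x hx => (Finset.mem_filter.mp hx).2)
  -- good sets
  set G1 := A1 \ (B12 ∪ B13) with hG1def
  set G2 := A2 \ (B21 ∪ B23) with hG2def
  set G3 := A3 \ (B31 ∪ B32) with hG3def
  have goodcard : ∀ (A Ba Bb : Finset V), A.card = M → Ba ⊆ A → Bb ⊆ A →
      (Ba.card : ℝ) ≤ ε * A.card → (Bb.card : ℝ) ≤ ε * A.card →
      (1 - 2 * ε) * M ≤ ((A \ (Ba ∪ Bb)).card : ℝ) := by
    intro A Ba Bb hA hBa hBb ha hb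
    have hsub : Ba ∪ Bb ⊆ A := Finset.union_subset hBa hBb
    have h1 : (A \ (Ba ∪ Bb)).card = A.card - (Ba ∪ Bb).card := Finset.card_sdiff_of_subset hsub
    have h2 : (Ba ∪ Bb).card ≤ Ba.card + Bb.card := Finset.card_union_le _ _
    have h3 : (Ba ∪ Bb).card ≤ A.card := Finset.card_le_card hsub
    have h4 : ((A \ (Ba ∪ Bb)).card : ℝ) = (A.card : ℝ) - ((Ba ∪ Bb).card : ℝ) := by
      rw [h1, Nat.cast_sub h3]
    have h5 : ((Ba ∪ Bb).card : ℝ) ≤ (Ba.card : ℝ) + (Bb.card : ℝ) := by exact_mod_cast h2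
    rw [hA] at ha hb
    rw [h4, hA]
    linarith
  have hG1c : (1 - 2 * ε) * M ≤ (G1.card : ℝ) := goodcard A1 B12 B13 hc1
    (Finset.filter_subset _ _) (Finset.filter_subset _ _) hb12 hb13
  have hG2c : (1 - 2 * ε) * M ≤ (G2.card : ℝ) := goodcard A2 B21 B23 hc2
    (Finset.filter_subset _ _) (Finset.filter_subset _ _) hb21 hb23
  have hG3c : (1 - 2 * ε) * M ≤ (G3.card : ℝ) := goodcard A3 B31 B32 hc3
    (Finset.filter_subset _ _) (Finset.filter_subset _ _) hb31 hb32
  set M' := min G1.card (min G2.card G3.card) with hM'def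
  have hM'1 : M' ≤ G1.card := min_le_left _ _
  have hM'2 : M' ≤ G2.card := le_trans (min_le_right _ _) (min_le_left _ _)
  have hM'3 : M' ≤ G3.card := le_trans (min_le_right _ _) (min_le_right _ _)
  have hM'r : (1 - 2 * ε) * M ≤ (M' : ℝ) := by
    have hcases : G1.card ≤ M' ∨ G2.card ≤ M' ∨ G3.card ≤ M' := by
      rw [hM'def]; omega
    rcases hcases with h | h | h
    · exact hG1c.trans (Nat.cast_le.mpr h)
    · exact hG2c.trans (Nat.cast_le.mpr h)
    · exact hG3c.trans (Nat.cast_le.mpr h)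
  obtain ⟨A1', hA1'G, hA1'card⟩ := Finset.exists_subset_card_eq hM'1
  obtain ⟨A2', hA2'G, hA2'card⟩ := Finset.exists_subset_card_eq hM'2
  obtain ⟨A3', hA3'G, hA3'card⟩ := Finset.exists_subset_card_eq hM'3
  have hs1 : A1' ⊆ A1 := hA1'G.trans (Finset.sdiff_subset)
  have hs2 : A2' ⊆ A2 := hA2'G.trans (Finset.sdiff_subset)
  have hs3 : A3' ⊆ A3 := hA3'G.trans (Finset.sdiff_subset)
  have hcard1 : (1 - 2 * ε) * (A1.card : ℝ) ≤ A1'.card := by rw [hc1, hA1'card]; exact hM'r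
  have hcard2 : (1 - 2 * ε) * (A2.card : ℝ) ≤ A2'.card := by rw [hc2, hA2'card]; exact hM'r
  have hcard3 : (1 - 2 * ε) * (A3.card : ℝ) ≤ A3'.card := by rw [hc3, hA3'card]; exact hM'r
  -- degree facts
  have hdeg : ∀ (A' Gg A Ba Bb : Finset V) (T : Finset V), A' ⊆ Gg → Gg = A \ (Ba ∪ Bb) →
      Ba = A.filter (fun x => ((T.filter fun y => G.Adj x y).card : ℝ) < (δ - ε) * T.card) →
      ∀ x ∈ A', (δ - ε) * T.card ≤ ((T.filter fun y => G.Adj x y).card : ℝ) := by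
    intro A' Gg A Ba Bb T hsub hGg hBa x hx
    have hxG : x ∈ Gg := hsub hx
    rw [hGg, Finset.mem_sdiff, Finset.mem_union] at hxG
    have hxA : x ∈ A := hxG.1
    have hnot : x ∉ Ba := fun h => hxG.2 (Or.inl h)
    rw [hBa, Finset.mem_filter] at hnot
    push_neg at hnot
    exact hnot hxA
  refine ⟨M', A1', A2', A3', by rwa [hM'def], hs1, hs2, hs3, hA1'card, hA2'card, hA3'card,
    ?_, ?_, ?_⟩
  · exact pair_superreg G hε0 hε hδ hs1 hs2 hcard1 hcard2 hreg12
      (hdeg A1' G1 A1 B12 B13 A2 hA1'G hG1def hB12def)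
      (hdeg A2' G2 A2 B21 B23 A1 hA2'G hG2def hB21def)
  · exact pair_superreg G hε0 hε hδ hs1 hs3 hcard1 hcard3 hreg13
      (hdeg A1' G1 A1 B13 B12 A3 hA1'G (by rw [hG1def, Finset.union_comm]) hB13def)
      (hdeg A3' G3 A3 B31 B32 A1 hA3'G hG3def hB31def)
  · exact pair_superreg G hε0 hε hδ hs2 hs3 hcard2 hcard3 hreg23
      (hdeg A2' G2 A2 B23 B21 A3 hA2'G (by rw [hG2def, Finset.union_comm]) hB23def)
      (hdeg A3' G3 A3 B32 B31 A2 hA3'G (by rw [hG3def, Finset.union_comm]) hB32def)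
end

section
/- Let $G$ be a $d$-closed graph on vertex set $V$, let $U \subseteq V$ be a clique of size $d$ in $G$, and let $v, w \in V \setminus U$ be distinct vertices each adjacent to all vertices of $U$. Then $\{v,w\}$ is an edge of $G$. -/
open scoped Classical

/-- The rigidity matrix of a framework `(G, p)` in `ℝ^d`: rows are indexed by edges,
columns by pairs (vertex, coordinate); the row of an edge `{u,v}` is supported on the
columns of `u` and `v`, where it equals `p u - p v` and `p v - p u` respectively. -/
noncomputable def rigidityMatrix {V : Type*} (G : SimpleGraph V) (d : ℕ)
    (p : V → Fin d → ℝ) : Matrix G.edgeSet (V × Fin d) ℝ :=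
  fun e wi =>
    if h : wi.1 ∈ (e : Sym2 V) then p wi.1 wi.2 - p (Sym2.Mem.other h) wi.2 else 0

/-- An embedding is generic if its `d|V|` coordinates are algebraically independent
over the rationals. -/
def IsGenericEmbedding {V : Type*} {d : ℕ} (p : V → Fin d → ℝ) : Prop :=
  AlgebraicIndependent ℚ (fun vi : V × Fin d => p vi.1 vi.2)

/-- A graph is `d`-closed if it equals its own `d`-rigidity closure: whenever adding a
non-edge `{u,v}` does not increase the rank of the generic rigidity matrix, `{u,v}` is
already an edge of `G`. -/
def IsDClosed {V : Type*} [Fintype V] (d : ℕ) (G : SimpleGraph V) : Prop :=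
  ∀ u v : V, u ≠ v →
    (∀ p : V → Fin d → ℝ, IsGenericEmbedding p →
      (rigidityMatrix (G ⊔ SimpleGraph.fromEdgeSet {s(u, v)}) d p).rank =
        (rigidityMatrix G d p).rank) →
    G.Adj u v

/-!
Let `S = U ∪ {v, w}`. Its `d + 2` points are affinely dependent, and by genericity every `d + 1`
of them are affinely independent, so the dependence `∑ a x • p x = 0`, `∑ a x = 0` has all
coefficients nonzero. The weights `a x * a y` form an equilibrium stress on the complete graph
on `S`; solving it for the edge `vw`, whose weight `a v * a w` is nonzero, puts the row of `vw`
in the span of the other rows, which are rows of `G` since `S` spans a complete graph minus `vw`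
in `G`. Hence adding `vw` does not increase the rank, and `d`-closedness gives `vw ∈ G`.
-/

open Finset SimpleGraph

theorem Submodule.mem_of_sum_smul_eq_zero {K E ι : Type*} [Field K] [AddCommGroup E]
    [Module K E] {M : Submodule K E} {s t : Finset ι} {c : ι → K} {f : ι → E} {r : E}
    (hsum : ∑ i ∈ s, c i • f i = 0) (hts : t ⊆ s) (ht : ∀ i ∈ t, f i = r)
    (hM : ∀ i ∈ s \ t, f i ∈ M) (hc : ∑ i ∈ t, c i ≠ 0) : r ∈ M := by
  have hsplit : (∑ i ∈ t, c i) • r = -∑ i ∈ s \ t, c i • f i := by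
    have ht' : ∑ i ∈ t, c i • f i = (∑ i ∈ t, c i) • r := by
      rw [sum_smul]
      exact sum_congr rfl fun i hi => by rw [ht i hi]
    rw [eq_neg_iff_add_eq_zero, ← ht', add_comm, sum_sdiff hts, hsum]
  rw [← smul_mem_iff M hc, hsplit]
  exact M.neg_mem (M.sum_mem fun i hi => M.smul_mem _ (hM i hi))

section

variable {V : Type*} {d : ℕ}

noncomputable def homogeneousCoords (p : V → Fin d → ℝ) (x : V) : Fin (d + 1) → ℝ :=
  Fin.snoc (p x) 1

lemma sum_smul_homogeneousCoords_eq_zero {p : V → Fin d → ℝ} {s : Finset V} {a : V → ℝ}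
    (h : ∑ x ∈ s, a x • homogeneousCoords p x = 0) :
    ∑ x ∈ s, a x = 0 ∧ ∑ x ∈ s, a x • p x = 0 := by
  refine ⟨by simpa [homogeneousCoords] using congrFun h (Fin.last d), funext fun i => ?_⟩
  simpa [homogeneousCoords] using congrFun h i.castSucc

namespace IsGenericEmbedding

variable {p : V → Fin d → ℝ}

theorem linearIndependent_homogeneousCoords (hp : IsGenericEmbedding p) {f : Fin (d + 1) → V}
    (hf : Function.Injective f) : LinearIndependent ℝ fun k => homogeneousCoords p (f k) := by
  let N : Matrix (Fin (d + 1)) (Fin (d + 1)) (MvPolynomial (V × Fin d) ℚ) :=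
    .of fun k => Fin.snoc (fun i => MvPolynomial.X (f k, i)) 1
  have hN : (MvPolynomial.aeval fun vi : V × Fin d => p vi.1 vi.2).mapMatrix N =
      .of fun k => homogeneousCoords p (f k) := by
    ext k j
    induction j using Fin.lastCases <;> simp [N, homogeneousCoords]
  -- at the 0/1 point `σ` the symbolic matrix `N` becomes upper unitriangular, so `N.det ≠ 0`
  let σ : V × Fin d → ℚ := fun vi => if vi.1 = f vi.2.castSucc then 1 else 0
  have hσ : MvPolynomial.eval σ N.det = 1 := by
    rw [RingHom.map_det, Matrix.det_of_isUpperTriangular]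
    · refine prod_eq_one fun k _ => ?_
      induction k using Fin.lastCases <;> simp [N, σ]
    · intro k j hjk
      induction j using Fin.lastCases with
      | last => exact absurd hjk (Fin.le_last k).not_gt
      | cast i => simp [N, σ, hf.eq_iff, (show i.castSucc < k from hjk).ne']
  refine Matrix.linearIndependent_rows_of_det_ne_zero
    (A := .of fun k => homogeneousCoords p (f k)) fun h => ?_
  rw [← hN, ← AlgHom.map_det] at h
  simp [hp.eq_zero_of_aeval_eq_zero _ h] at hσ

theorem linearIndepOn_homogeneousCoords (hp : IsGenericEmbedding p) {T : Finset V}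
    (hT : #T = d + 1) : LinearIndepOn ℝ (homogeneousCoords p) (T : Set V) := by
  let e : Fin (d + 1) ≃ T := (T.equivFin.trans (finCongr hT)).symm
  rw [LinearIndepOn, ← linearIndependent_equiv e]
  exact hp.linearIndependent_homogeneousCoords (Subtype.val_injective.comp e.injective)

theorem exists_nowhere_zero_affine_dependence (hp : IsGenericEmbedding p) {S : Finset V}
    (hS : #S = d + 2) :
    ∃ a : V → ℝ, ∑ x ∈ S, a x = 0 ∧ ∑ x ∈ S, a x • p x = 0 ∧ ∀ x ∈ S, a x ≠ 0 := by
  have hdep : ¬LinearIndepOn ℝ (homogeneousCoords p) (S : Set V) := fun h => by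
    have := h.fintype_card_le_finrank
    simp [hS] at this
  obtain ⟨a, ha, x₀, hx₀S, hx₀⟩ := not_linearIndepOn_finset_iff.mp hdep
  refine ⟨a, sum_smul_homogeneousCoords_eq_zero ha |>.1,
    sum_smul_homogeneousCoords_eq_zero ha |>.2, fun z hz haz => hx₀ ?_⟩
  -- a dependence vanishing at `z` would be a dependence among the other `d + 1` points
  have hT : #(S.erase z) = d + 1 := by rw [card_erase_of_mem hz, hS]; rfl
  have hzero := linearIndepOn_finset_iff.mp (hp.linearIndepOn_homogeneousCoords hT) a
    (by rwa [sum_erase S (by simp [haz])])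
  by_cases h : x₀ = z
  · rwa [h]
  · exact hzero x₀ (mem_erase.2 ⟨h, hx₀S⟩)

end IsGenericEmbedding

noncomputable def pairRow (p : V → Fin d → ℝ) (x y : V) : V × Fin d → ℝ := fun zi =>
  (if zi.1 = x then p x zi.2 - p y zi.2 else 0) + (if zi.1 = y then p y zi.2 - p x zi.2 else 0)

lemma pairRow_comm (p : V → Fin d → ℝ) (x y : V) : pairRow p x y = pairRow p y x :=
  funext fun _ => add_comm _ _

lemma pairRow_self (p : V → Fin d → ℝ) (x : V) : pairRow p x x = 0 := by
  ext; simp [pairRow]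

lemma rigidityMatrix_apply_mk {G : SimpleGraph V} {p : V → Fin d → ℝ} {x y : V}
    (h : s(x, y) ∈ G.edgeSet) : rigidityMatrix G d p ⟨s(x, y), h⟩ = pairRow p x y := by
  ext ⟨z, i⟩
  simp only [rigidityMatrix, pairRow]
  by_cases hz : z ∈ s(x, y)
  · rw [dif_pos hz]
    have hother := Sym2.other_spec hz
    rw [Sym2.eq_iff] at hother
    rcases hother with ⟨rfl, ho⟩ | ⟨rfl, ho⟩ <;> rw [ho] <;> split_ifs <;> simp_all
  · rw [Sym2.mem_iff, not_or] at hz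
    simp [hz.1, hz.2]

lemma sum_sum_smul_pairRow_eq_zero (p : V → Fin d → ℝ) (S : Finset V) {a : V → ℝ}
    (h₀ : ∑ x ∈ S, a x = 0) (h₁ : ∑ x ∈ S, a x • p x = 0) :
    ∑ x ∈ S, ∑ y ∈ S, (a x * a y) • pairRow p x y = 0 := by
  have equilibrium (x : V) (i : Fin d) : ∑ y ∈ S, a x * a y * (p x i - p y i) = 0 := by
    have h₁i : ∑ y ∈ S, a y * p y i = 0 := by simpa using congrFun h₁ i
    simp only [mul_sub, sum_sub_distrib, ← sum_mul, ← mul_sum, h₀, mul_assoc, h₁i]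
    ring
  ext ⟨z, i⟩
  have hswap (x : V) : a x * a z = a z * a x := mul_comm _ _
  simp [pairRow, mul_add, sum_add_distrib, hswap, equilibrium]

lemma pairRow_mem_span_row {G : SimpleGraph V} {p : V → Fin d → ℝ} {x y : V}
    (h : x = y ∨ G.Adj x y) :
    pairRow p x y ∈ Submodule.span ℝ (Set.range (rigidityMatrix G d p).row) := by
  rcases h with rfl | hadj
  · rw [pairRow_self]
    exact zero_mem _
  · rw [← rigidityMatrix_apply_mk hadj]
    exact Submodule.subset_span ⟨_, rfl⟩

lemma rank_rigidityMatrix_sup_edge [Fintype V] {G : SimpleGraph V} {p : V → Fin d → ℝ}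
    {v w : V} (h : pairRow p v w ∈ Submodule.span ℝ (Set.range (rigidityMatrix G d p).row)) :
    (rigidityMatrix (G ⊔ fromEdgeSet {s(v, w)}) d p).rank =
      (rigidityMatrix G d p).rank := by
  suffices hspan :
      Submodule.span ℝ (Set.range (rigidityMatrix (G ⊔ fromEdgeSet {s(v, w)}) d p).row) =
        Submodule.span ℝ (Set.range (rigidityMatrix G d p).row) by
    rw [Matrix.rank_eq_finrank_span_row, Matrix.rank_eq_finrank_span_row, hspan]
  apply le_antisymm <;> rw [Submodule.span_le]
  · rintro _ ⟨⟨e, he⟩, rfl⟩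
    rw [edgeSet_sup, Set.mem_union] at he
    rcases he with he | he
    · exact Submodule.subset_span ⟨⟨e, he⟩, rfl⟩
    · rw [edgeSet_fromEdgeSet] at he
      obtain ⟨rfl, -⟩ := he
      show rigidityMatrix _ d p ⟨s(v, w), he⟩ ∈ _
      rwa [rigidityMatrix_apply_mk]
  · rintro _ ⟨⟨e, he⟩, rfl⟩
    exact Submodule.subset_span ⟨⟨e, edgeSet_mono le_sup_left he⟩, rfl⟩

lemma SimpleGraph.eq_or_adj_of_mem_insert_insert {G : SimpleGraph V} {U : Finset V}
    {v w x y : V} (hU : G.IsClique (U : Set V)) (hvU : ∀ u ∈ U, G.Adj v u)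
    (hwU : ∀ u ∈ U, G.Adj w u) (hx : x ∈ insert v (insert w U))
    (hy : y ∈ insert v (insert w U)) (hne : s(x, y) ≠ s(v, w)) : x = y ∨ G.Adj x y := by
  refine or_iff_not_imp_left.2 fun hxy => ?_
  simp only [mem_insert] at hx hy
  rcases hx with rfl | rfl | hx <;> rcases hy with rfl | rfl | hy
  all_goals first
    | exact absurd rfl hxy
    | exact absurd rfl hne
    | exact absurd Sym2.eq_swap hne
    | exact hvU _ hy
    | exact hwU _ hy
    | exact (hvU _ hx).symm
    | exact (hwU _ hx).symm
    | exact hU hx hy hxy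

end

theorem stmt_10_general {V : Type*} [Fintype V] (d : ℕ) (G : SimpleGraph V)
    (hclosed : IsDClosed d G) (U : Finset V) (hclique : G.IsClique (U : Set V))
    (hU : U.card = d) (v w : V) (hv : v ∉ U) (hw : w ∉ U) (hvw : v ≠ w)
    (hvU : ∀ u ∈ U, G.Adj v u) (hwU : ∀ u ∈ U, G.Adj w u) :
    G.Adj v w := by
  refine hclosed v w hvw fun p hp => rank_rigidityMatrix_sup_edge ?_
  set S := insert v (insert w U)
  have hS : #S = d + 2 := by
    rw [card_insert_of_notMem (by simp [hvw, hv]), card_insert_of_notMem hw, hU]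
  obtain ⟨a, ha₀, ha₁, ha⟩ := hp.exists_nowhere_zero_affine_dependence hS
  have hstress := sum_sum_smul_pairRow_eq_zero p S ha₀ ha₁
  rw [← sum_product'] at hstress
  have hvS : v ∈ S := mem_insert_self _ _
  have hwS : w ∈ S := mem_insert_of_mem (mem_insert_self _ _)
  have hpair : (v, w) ≠ (w, v) := fun h => hvw (Prod.ext_iff.1 h).1
  -- the two ordered copies of `vw` carry total weight `2 * a v * a w ≠ 0`
  refine Submodule.mem_of_sum_smul_eq_zero hstress (t := {(v, w), (w, v)}) ?_ ?_ ?_ ?_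
  · simp [insert_subset_iff, hvS, hwS]
  · simp [pairRow_comm p w v]
  · rintro ⟨x, y⟩ hxy
    simp only [mem_sdiff, mem_product, mem_insert, mem_singleton, not_or] at hxy
    obtain ⟨⟨hx, hy⟩, hne_vw, hne_wv⟩ := hxy
    have hne : s(x, y) ≠ s(v, w) := by simp_all [Prod.ext_iff]
    exact pairRow_mem_span_row (eq_or_adj_of_mem_insert_insert hclique hvU hwU hx hy hne)
  · rw [sum_pair hpair]
    simpa [mul_comm (a w), ← two_mul] using ⟨ha v hvS, ha w hwS⟩

/-- Lemma 2.1. Let `G` be a `d`-closed graph, `U` a clique of size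
`d` in `G`, and `v, w ∉ U` distinct vertices each adjacent to all of `U`. Then `vw` is
an edge of `G`. -/
theorem stmt_10 {V : Type*} [Fintype V] [DecidableEq V] (d : ℕ) (G : SimpleGraph V)
    (hclosed : IsDClosed d G) (U : Finset V) (hclique : G.IsClique (U : Set V))
    (hU : U.card = d) (v w : V) (hv : v ∉ U) (hw : w ∉ U) (hvw : v ≠ w)
    (hvU : ∀ u ∈ U, G.Adj v u) (hwU : ∀ u ∈ U, G.Adj w u) :
    G.Adj v w :=
  stmt_10_general d G hclosed U hclique hU v w hv hw hvw hvU hwU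
end

section
/- Let $G = (V, E)$ be a graph with $|V| \ge d+1$ satisfying the following closure property: whenever $U$ is a clique of size $d$ and $v, w \in V \setminus U$ are distinct vertices each adjacent to all of $U$, then $vw \in E$. If $G$ has minimum degree at least $\delta$ and contains a clique of size at least $d + (|V| - 1 - \delta)$, then $G$ is complete. -/
/-- combinatorial abstraction of Lemma 3.3. Let `G` be a graph on
at least `d+1` vertices with the closure property: whenever `U` is a clique of size
`d` and `v, w ∉ U` are distinct vertices each adjacent to all of `U`, then `vw` is an
edge. If `G` has minimum degree at least `δ` and a clique of size at least
`d + (|V| - 1 - δ)`, then `G` is complete. -/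
theorem stmt_12 {V : Type*} [Fintype V] [DecidableEq V] (d δ : ℕ)
    (G : SimpleGraph V) [DecidableRel G.Adj]
    (hcard : d + 1 ≤ Fintype.card V)
    (hclosure : ∀ U : Finset V, G.IsClique (U : Set V) → U.card = d →
      ∀ v w : V, v ∉ U → w ∉ U → v ≠ w →
        (∀ u ∈ U, G.Adj v u) → (∀ u ∈ U, G.Adj w u) → G.Adj v w)
    (hδ : ∀ v : V, δ ≤ G.degree v)
    (S : Finset V) (hS : G.IsClique (S : Set V))
    (hScard : (d : ℝ) + ((Fintype.card V : ℝ) - 1 - (δ : ℝ)) ≤ (S.card : ℝ)) :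
    G = ⊤ := by
  set n := Fintype.card V with hn
  have hV : Nonempty V := Fintype.card_pos_iff.mp (by omega)
  obtain ⟨v0⟩ := hV
  have hδn : δ + 1 ≤ n := Nat.succ_le_of_lt (lt_of_le_of_lt (hδ v0) (G.degree_lt_card_verts v0))
  set c := n - 1 - δ with hc
  have hccast : (c : ℝ) = (n : ℝ) - 1 - (δ : ℝ) := by
    rw [hc, Nat.sub_sub, Nat.cast_sub (by omega)]
    push_cast; ring
  have hScard' : d + c ≤ S.card := by
    have : ((d + c : ℕ) : ℝ) ≤ (S.card : ℝ) := by push_cast; rw [hccast]; linarith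
    exact_mod_cast this
  have key : ∀ m (K : Finset V), G.IsClique (K : Set V) → d + c ≤ K.card →
      n - K.card ≤ m → ∃ K' : Finset V, G.IsClique (K' : Set V) ∧ K'.card = n := by
    intro m
    induction m with
    | zero =>
      intro K hK hKc hm
      exact ⟨K, hK, by have := Finset.card_le_univ K; omega⟩
    | succ m ih =>
      intro K hK hKc hm
      by_cases hfull : K.card = n
      · exact ⟨K, hK, hfull⟩
      have hKlt : K.card < n := lt_of_le_of_ne (Finset.card_le_univ K) hfull
      obtain ⟨v, hv⟩ : ∃ v, v ∉ K := by
        by_contra h; push_neg at h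
        have : K = Finset.univ := Finset.eq_univ_iff_forall.mpr h
        rw [this] at hKlt; simp [hn] at hKlt
      have hbad : (K.filter (fun u => ¬ G.Adj v u)).card ≤ c := by
        have hsub : K.filter (fun u => ¬ G.Adj v u) ⊆ (insert v (G.neighborFinset v))ᶜ := by
          intro u hu
          simp only [Finset.mem_filter] at hu
          simp only [Finset.mem_compl, Finset.mem_insert, SimpleGraph.mem_neighborFinset]
          push_neg
          exact ⟨fun h => hv (h ▸ hu.1), hu.2⟩
        calc (K.filter (fun u => ¬ G.Adj v u)).card
            ≤ ((insert v (G.neighborFinset v))ᶜ).card := Finset.card_le_card hsub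
          _ = n - (G.degree v + 1) := by
              rw [Finset.card_compl,
                Finset.card_insert_of_notMem (G.notMem_neighborFinset_self v),
                G.card_neighborFinset_eq_degree]
          _ ≤ c := by have := hδ v; omega
      have hgood : d ≤ (K.filter (fun u => G.Adj v u)).card := by
        have := Finset.card_filter_add_card_filter_not
          (s := K) (p := fun u => G.Adj v u)
        omega
      obtain ⟨U, hUsub, hUcard⟩ := Finset.exists_subset_card_eq hgood
      have hUK : U ⊆ K := hUsub.trans (Finset.filter_subset _ _)
      have hUclique : G.IsClique (U : Set V) := hK.subset (Finset.coe_subset.mpr hUK)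
      have hvU : v ∉ U := fun h => hv (hUK h)
      have hvadjU : ∀ u ∈ U, G.Adj v u := fun u hu => (Finset.mem_filter.mp (hUsub hu)).2
      have hvK : ∀ w ∈ K, G.Adj v w := by
        intro w hw
        by_cases hwU : w ∈ U
        · exact hvadjU w hwU
        · refine hclosure U hUclique hUcard v w hvU hwU (fun h => hv (h ▸ hw)) hvadjU ?_
          intro u hu
          exact hK (Finset.mem_coe.mpr hw) (Finset.mem_coe.mpr (hUK hu))
            (fun h => hwU (h ▸ hu))
      have hK' : G.IsClique ((insert v K : Finset V) : Set V) := by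
        rw [Finset.coe_insert]
        exact hK.insert (fun w hw _ => (hvK w (Finset.mem_coe.mp hw)))
      exact ih (insert v K) hK'
        (by rw [Finset.card_insert_of_notMem hv]; omega)
        (by rw [Finset.card_insert_of_notMem hv]; omega)
  obtain ⟨K, hK, hKcard⟩ := key n S hS hScard' (by omega)
  have hKuniv : K = Finset.univ := Finset.eq_univ_of_card K hKcard
  ext x y
  simp only [SimpleGraph.top_adj]
  constructor
  · exact G.ne_of_adj
  · intro hxy
    exact hK (by simp [hKuniv]) (by simp [hKuniv]) hxy
end

section
/- Let $G = (V,E)$ be a graph with $n$ vertices, let $V_1, \dots, V_d$ be a partition of $V$, and for $i \ne j$ let $G[V_i, V_j]$ denote the bipartite-type subgraph on vertex set $V_i \cup V_j$ with only the edges meeting both $V_i$ and $V_j$. Let $V = A \cup B$ be a partition, and set $A_i := V_i \cap A$ and $B_j := V_j \cap B$. Suppose that $G[V_i]$ is connected for all $i$, that $A_i$ and $B_j$ lie in a common component of $G[V_i, V_j]$ for all $i \ne j$, and that $E(A_i, A_j) \ne \varnothing$ for all $i \ne j$. Then $G[V_i, V_j]$ is connected for all $i \ne j$. -/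
/-- The graph `G[A,B]` on vertex set `A ∪ B` whose edges are the edges of `G` meeting
both `A` and `B`. -/
def betweenGraph {V : Type*} (G : SimpleGraph V) (A B : Set V) :
    SimpleGraph ↥(A ∪ B) :=
  SimpleGraph.fromRel fun x y =>
    G.Adj x y ∧ (((x : V) ∈ A ∧ (y : V) ∈ B) ∨ ((x : V) ∈ B ∧ (y : V) ∈ A))

def betweenGraphComm {V : Type*} (G : SimpleGraph V) (A B : Set V) :
    betweenGraph G A B ≃g betweenGraph G B A := by
  refine ⟨Equiv.setCongr (Set.union_comm A B), ?_⟩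
  intro x y
  simp only [betweenGraph, SimpleGraph.fromRel_adj, Equiv.setCongr_apply, ne_eq,
    Subtype.ext_iff]
  tauto


/-- Let `V₁, …, V_d` partition `V`, and `V = A ∪ B` a partition.
Suppose `G[Vᵢ]` is connected for all `i`; for all `i ≠ j` the sets `Aᵢ = Vᵢ ∩ A` and
`Bⱼ = Vⱼ ∩ B` lie in a common component of `G[Vᵢ,Vⱼ]`; and `E(Aᵢ,Aⱼ) ≠ ∅` for all
`i ≠ j`. Then `G[Vᵢ,Vⱼ]` is connected for all `i ≠ j`. -/
theorem stmt_15 {V : Type*} (G : SimpleGraph V) (d : ℕ) (P : Fin d → Set V)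
    (hPdisj : ∀ i j : Fin d, i ≠ j → Disjoint (P i) (P j))
    (hPcover : ∀ v : V, ∃ i : Fin d, v ∈ P i)
    (A B : Set V) (hABcover : A ∪ B = Set.univ) (hABdisj : Disjoint A B)
    (hconn : ∀ i : Fin d, (betweenGraph G (P i) (P i)).Connected)
    (hcommon : ∀ i j : Fin d, i ≠ j →
      ∀ x y : ↥(P i ∪ P j), ((x : V) ∈ P i ∩ A ∪ P j ∩ B) →
        ((y : V) ∈ P i ∩ A ∪ P j ∩ B) → (betweenGraph G (P i) (P j)).Reachable x y)
    (hedge : ∀ i j : Fin d, i ≠ j →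
      ∃ u ∈ P i ∩ A, ∃ v ∈ P j ∩ A, G.Adj u v) :
    ∀ i j : Fin d, i ≠ j → (betweenGraph G (P i) (P j)).Connected := by

  intro i j hij
  obtain ⟨u, ⟨huP, huA⟩, v, ⟨hvP, hvA⟩, hadj⟩ := hedge i j hij
  have hne : u ≠ v := fun h => (hPdisj i j hij).ne_of_mem huP hvP h
  set U : ↥(P i ∪ P j) := ⟨u, Or.inl huP⟩ with hU
  set W : ↥(P i ∪ P j) := ⟨v, Or.inr hvP⟩ with hW
  have hUW : (betweenGraph G (P i) (P j)).Adj U W := by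
    refine ⟨by simpa [Subtype.ext_iff] using hne, Or.inl ⟨hadj, Or.inl ⟨huP, hvP⟩⟩⟩
  -- every vertex reaches U
  have key : ∀ x : ↥(P i ∪ P j), (betweenGraph G (P i) (P j)).Reachable x U := by
    intro x
    have hAB : (x : V) ∈ A ∨ (x : V) ∈ B := by
      have : (x : V) ∈ A ∪ B := hABcover ▸ Set.mem_univ _
      exact this
    rcases x.2 with hxi | hxj
    · rcases hAB with hxA | hxB
      · exact hcommon i j hij x U (Or.inl ⟨hxi, hxA⟩) (Or.inl ⟨huP, huA⟩)
      · -- x ∈ P i ∩ B : use hcommon j i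
        have hx' : (x : V) ∈ P j ∪ P i := Or.inr hxi
        have h := hcommon j i hij.symm ⟨x, hx'⟩ ⟨v, Or.inl hvP⟩
          (Or.inr ⟨hxi, hxB⟩) (Or.inl ⟨hvP, hvA⟩)
        have h2 := h.map (betweenGraphComm G (P j) (P i)).toHom
        have e1 : (betweenGraphComm G (P j) (P i)) ⟨(x : V), hx'⟩ = x :=
          Subtype.ext rfl
        have e2 : (betweenGraphComm G (P j) (P i)) ⟨v, Or.inl hvP⟩ = W :=
          Subtype.ext rfl
        rw [show ((betweenGraphComm G (P j) (P i)).toHom ⟨(x:V), hx'⟩) = x from e1,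
            show ((betweenGraphComm G (P j) (P i)).toHom ⟨v, Or.inl hvP⟩) = W from e2] at h2
        exact h2.trans hUW.symm.reachable
    · rcases hAB with hxA | hxB
      · have hx' : (x : V) ∈ P j ∪ P i := Or.inl hxj
        have h := hcommon j i hij.symm ⟨x, hx'⟩ ⟨v, Or.inl hvP⟩
          (Or.inl ⟨hxj, hxA⟩) (Or.inl ⟨hvP, hvA⟩)
        have h2 := h.map (betweenGraphComm G (P j) (P i)).toHom
        have e1 : (betweenGraphComm G (P j) (P i)) ⟨(x : V), hx'⟩ = x :=
          Subtype.ext rfl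
        have e2 : (betweenGraphComm G (P j) (P i)) ⟨v, Or.inl hvP⟩ = W :=
          Subtype.ext rfl
        rw [show ((betweenGraphComm G (P j) (P i)).toHom ⟨(x:V), hx'⟩) = x from e1,
            show ((betweenGraphComm G (P j) (P i)).toHom ⟨v, Or.inl hvP⟩) = W from e2] at h2
        exact h2.trans hUW.symm.reachable
      · exact hcommon i j hij x U (Or.inr ⟨hxj, hxB⟩) (Or.inl ⟨huP, huA⟩)
  exact { preconnected := fun x y => (key x).trans (key y).symm, nonempty := ⟨U⟩ }
end
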